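/- arXiv:1610.00046 — 8 statements merged into one kernel-verified Lean document; each statement's English description precedes it below -/
import Mathlib

section
/- Let B be an abelian group of cardinality 2^m, where m is an infinite cardinal. Then the set of subgroups of B has cardinality exactly 2^(2^m). -/
/-!
The upper bound is `#(Set B) = 2 ^ #B`. For the lower bound put `κ = 2 ^ m`; by König,
`cof κ > m ≥ ℵ₀`. Localizing at the nonzero integers kills exactly the torsion `T` of `B` and
lands in a `ℚ`-vector space of dimension `rank ℤ B`, so `#B ≤ max ℵ₀ (rank ℤ B) * #T`.
If `rank ℤ B ≥ κ`, the subsets of an independent family of size `κ` generate pairwise distinct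
subgroups. Otherwise `#T ≥ κ`; since `T` is the countable union of the `B[n]` and `cof κ > ℵ₀`,
some `B[n]` has size `κ`, and `#B[ab] ≤ #B[a] * #B[b]` pushes this down to a prime `p`. Then
`B[p]` is an `𝔽_p`-vector space of dimension `κ`, and we conclude as before.
-/

open Cardinal Submodule
open scoped nonZeroDivisors

universe u v

namespace Cardinal

theorem le_or_le_of_le_mul {κ a b : Cardinal} (hκ : ℵ₀ ≤ κ) (h : κ ≤ a * b) : κ ≤ a ∨ κ ≤ b := by
  by_contra! hlt
  exact (h.trans_lt (mul_lt_of_lt hκ hlt.1 hlt.2)).false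

theorem mk_iUnion_lt_of_countable {α : Type u} {ι : Type v} [Countable ι] {κ : Cardinal.{u}}
    (hκ : ℵ₀ < κ.ord.cof) {f : ι → Set α} (hf : ∀ i, #(f i) < κ) : #(⋃ i, f i) < κ := by
  have hκ' : ℵ₀ < lift.{v} κ := by simpa using hκ.trans_le (Ordinal.cof_ord_le κ)
  have hcof : ℵ₀ < (lift.{v} κ).ord.cof := by
    have := (lift_lt.mpr hκ : lift.{v} ℵ₀ < lift.{v} κ.ord.cof)
    rwa [lift_aleph0, Ordinal.lift_cof, lift_ord] at this
  have hι : lift.{u} #ι ≤ ℵ₀ := lift_le_aleph0.mpr mk_le_aleph0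
  suffices lift.{v} #(⋃ i, f i) < lift.{v} κ from lift_lt.mp this
  refine (mk_iUnion_le_lift f).trans_lt (mul_lt_of_lt hκ'.le (hι.trans_lt hκ') ?_)
  rw [← lift_iSup bddAbove_of_small, lift_lt]
  exact lift_iSup_lt_of_lt_cof_ord (hι.trans_lt hcof) hf

end Cardinal

theorem AddMonoidHom.mk_le_mk_mul_mk_ker {G H : Type u} [AddGroup G] [AddGroup H] (f : G →+ H) :
    #G ≤ #H * #f.ker := by
  rw [mk_congr (AddSubgroup.addGroupEquivQuotientProdAddSubgroup (s := f.ker)), mk_prod,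
    lift_id, lift_id]
  gcongr
  exact mk_le_of_injective (QuotientAddGroup.kerLift_injective f)

section AddSubgroups

variable {G : Type u} [AddCommGroup G]

theorem mk_addSubgroup_le_two_pow : #(AddSubgroup G) ≤ 2 ^ #G :=
  calc #(AddSubgroup G) ≤ #(Set G) := mk_le_of_injective SetLike.coe_injective
    _ = 2 ^ #G := mk_set

theorem two_pow_mk_le_mk_addSubgroup_of_linearIndependent {R : Type v} [Ring R] [Nontrivial R]
    [Module R G] {ι : Type u} {f : ι → G} (hf : LinearIndependent R f) :
    2 ^ #ι ≤ #(AddSubgroup G) := by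
  have hclosure (s : Set ι) {i : ι} (hi : f i ∈ AddSubgroup.closure (f '' s)) : i ∈ s := by
    by_contra his
    exact hf.notMem_span_image his
      ((AddSubgroup.closure_le (Submodule.span R (f '' s)).toAddSubgroup).mpr subset_span hi)
  have hinj : Function.Injective fun s : Set ι ↦ AddSubgroup.closure (f '' s) := by
    intro s t (hst : AddSubgroup.closure _ = AddSubgroup.closure _)
    ext i
    exact ⟨fun hi ↦ hclosure t (hst ▸ AddSubgroup.subset_closure (Set.mem_image_of_mem f hi)),
      fun hi ↦ hclosure s (hst ▸ AddSubgroup.subset_closure (Set.mem_image_of_mem f hi))⟩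
  calc 2 ^ #ι = #(Set ι) := mk_set.symm
    _ ≤ #(AddSubgroup G) := mk_le_of_injective hinj

theorem two_pow_rank_le_mk_addSubgroup (R : Type v) [Ring R] [HasRankNullity.{u} R] [Module R G] :
    2 ^ Module.rank R G ≤ #(AddSubgroup G) := by
  obtain ⟨s, hs, hli⟩ := exists_set_linearIndependent R G
  have : Nontrivial R := nontrivial_of_hasRankNullity R
  exact hs ▸ two_pow_mk_le_mk_addSubgroup_of_linearIndependent hli

theorem AddSubgroup.mk_addSubgroup_le (H : AddSubgroup G) :
    #(AddSubgroup H) ≤ #(AddSubgroup G) :=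
  mk_le_of_injective (AddSubgroup.map_injective H.subtype_injective)

end AddSubgroups

theorem Module.Free.mk_le_max_aleph0_rank {R : Type v} {M : Type u} [Ring R]
    [StrongRankCondition R] [Countable R] [AddCommGroup M] [Module R M] [Module.Free R M] :
    #M ≤ max ℵ₀ (Module.rank R M) := by
  have : Nontrivial R := nontrivial_of_invariantBasisNumber R
  have hM := mk_congr_lift (chooseBasis R M).repr.toEquiv
  rw [lift_umax] at hM
  rw [rank_eq_card_chooseBasisIndex, ← lift_le.{v}, hM]
  cases finite_or_infinite (ChooseBasisIndex R M)
  · simp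
  · rw [mk_finsupp_lift_of_infinite]
    simp only [lift_max, lift_lift, aleph0_le_mk, sup_of_le_right, sup_le_iff]
    exact ⟨(congrFun lift_umax.{u, v} _).le, (lift_le_aleph0.mpr mk_le_aleph0).trans (by simp)⟩

instance Localization.countable {R : Type*} [CommMonoid R] [Countable R] (S : Submonoid R) :
    Countable (Localization S) :=
  Localization.mkHom_surjective.countable

-- `R : Type` keeps `LocalizedModule R⁰ M` in the universe of `M`.
theorem mk_le_max_aleph0_rank_mul_mk_torsion (R : Type) (M : Type u) [CommRing R] [IsDomain R]
    [Countable R] [AddCommGroup M] [Module R M] :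
    #M ≤ max ℵ₀ (Module.rank R M) * #(torsion R M) := by
  let f := LocalizedModule.mkLinearMap R⁰ M
  have hker : (f.toAddMonoidHom.ker : Set M) ⊆ torsion R M := fun x hx ↦
    (mem_torsion_iff x).mpr ((IsLocalizedModule.eq_zero_iff R⁰ f).mp hx)
  have hrank : Module.rank (FractionRing R) (LocalizedModule R⁰ M) = Module.rank R M := by
    rw [IsLocalization.rank_eq (FractionRing R) R⁰ le_rfl, IsLocalizedModule.rank_eq R⁰ le_rfl f]
  calc #M ≤ #(LocalizedModule R⁰ M) * #f.toAddMonoidHom.ker :=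
        f.toAddMonoidHom.mk_le_mk_mul_mk_ker
    _ ≤ max ℵ₀ (Module.rank R M) * #(torsion R M) := by
      gcongr
      · exact hrank ▸ Module.Free.mk_le_max_aleph0_rank
      · exact mk_le_mk_of_subset hker

theorem Submodule.exists_le_mk_torsionBy {R : Type v} {M : Type u} [CommRing R] [Countable R]
    [AddCommGroup M] [Module R M] {κ : Cardinal.{u}} (hκ : ℵ₀ < κ.ord.cof)
    (h : κ ≤ #(torsion R M)) : ∃ a : R⁰, κ ≤ #(torsionBy R M a) := by
  by_contra! hlt
  have hunion : (torsion R M : Set M) = ⋃ a : R⁰, (torsionBy R M a : Set M) := by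
    ext
    simp
  have : #(torsion R M) < κ := by
    change #(torsion R M : Set M) < κ
    rw [hunion]
    exact mk_iUnion_lt_of_countable hκ hlt
  exact (h.trans_lt this).false

theorem Submodule.mk_torsionBy_mul_le {R : Type v} {M : Type u} [CommRing R] [AddCommGroup M]
    [Module R M] (a b : R) :
    #(torsionBy R M (a * b)) ≤ #(torsionBy R M a) * #(torsionBy R M b) := by
  have hmaps : ∀ x ∈ torsionBy R M (a * b), b • x ∈ torsionBy R M a := fun x hx ↦ by
    rw [mem_torsionBy_iff, smul_smul]
    exact hx
  let f := ((DistribSMul.toLinearMap R M b).restrict hmaps).toAddMonoidHom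
  have hker (x : f.ker) : (x : M) ∈ torsionBy R M b := congrArg Subtype.val x.2
  calc #(torsionBy R M (a * b)) ≤ #(torsionBy R M a) * #f.ker := f.mk_le_mk_mul_mk_ker
    _ ≤ #(torsionBy R M a) * #(torsionBy R M b) := by
      gcongr
      refine mk_le_of_injective (f := fun x ↦ ⟨x, hker x⟩) fun x y hxy ↦ ?_
      exact Subtype.ext (Subtype.ext (congrArg Subtype.val hxy :))

theorem Submodule.exists_prime_le_mk_torsionBy {R : Type v} {M : Type u} [CommRing R]
    [IsDomain R] [UniqueFactorizationMonoid R] [AddCommGroup M] [Module R M] {κ : Cardinal.{u}}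
    (hκ : ℵ₀ ≤ κ) {a : R} (ha : a ≠ 0) (h : κ ≤ #(torsionBy R M a)) :
    ∃ p, Prime p ∧ κ ≤ #(torsionBy R M p) := by
  by_contra! hlt
  suffices ∀ a : R, a ≠ 0 → #(torsionBy R M a) < κ from (h.trans_lt (this a ha)).false
  intro a
  induction a using UniqueFactorizationMonoid.induction_on_prime with
  | h₁ => exact fun h0 ↦ (h0 rfl).elim
  | h₂ x hx =>
    have : Subsingleton (torsionBy R M x) :=
      ⟨fun m n ↦ Subtype.ext <| by
        rw [(hx.smul_eq_zero).mp m.2, (hx.smul_eq_zero).mp n.2]⟩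
    exact fun _ ↦ (le_one_iff_subsingleton.mpr this).trans_lt (one_lt_aleph0.trans_le hκ)
  | h₃ b p hb hp ih =>
    exact fun _ ↦ (mk_torsionBy_mul_le p b).trans_lt (mul_lt_of_lt hκ (hlt p hp) (ih hb))

theorem exists_prime_le_mk_torsionBy_of_le_mk_torsion {B : Type u} [AddCommGroup B]
    {κ : Cardinal.{u}} (hκ : ℵ₀ < κ.ord.cof) (h : κ ≤ #(torsion ℤ B)) :
    ∃ p : ℕ, p.Prime ∧ κ ≤ #(torsionBy ℤ B p) := by
  obtain ⟨a, ha⟩ := exists_le_mk_torsionBy hκ h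
  obtain ⟨p, hp, hpκ⟩ := exists_prime_le_mk_torsionBy (hκ.le.trans (Ordinal.cof_ord_le κ))
    (nonZeroDivisors.coe_ne_zero a) ha
  have hdvd : p ∣ (p.natAbs : ℤ) := Int.dvd_natAbs.mpr dvd_rfl
  exact ⟨p.natAbs, Int.prime_iff_natAbs_prime.mp hp,
    hpκ.trans (mk_le_mk_of_subset (torsionBy_le_torsionBy_of_dvd _ _ hdvd))⟩

theorem two_pow_le_mk_addSubgroup_of_le_mk_torsionBy {B : Type u} [AddCommGroup B]
    {κ : Cardinal.{u}} (hκ : ℵ₀ < κ) {p : ℕ} (hp : p.Prime) (h : κ ≤ #(torsionBy ℤ B p)) :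
    2 ^ κ ≤ #(AddSubgroup B) := by
  have : Fact p.Prime := ⟨hp⟩
  let V := AddSubgroup.torsionBy B p
  let : Module (ZMod p) V := AddSubgroup.torsionBy.zmodModule
  have hrank : κ ≤ Module.rank (ZMod p) V :=
    (le_max_iff.mp (h.trans Module.Free.mk_le_max_aleph0_rank)).resolve_left hκ.not_ge
  calc 2 ^ κ ≤ 2 ^ Module.rank (ZMod p) V := power_le_power_left two_ne_zero hrank
    _ ≤ #(AddSubgroup V) := two_pow_rank_le_mk_addSubgroup (ZMod p)
    _ ≤ #(AddSubgroup B) := V.mk_addSubgroup_le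

theorem stmt_0 {B : Type u} [AddCommGroup B] (m : Cardinal.{u})
    (hm : ℵ₀ ≤ m) (hB : #B = (2 : Cardinal) ^ m) :
    #(AddSubgroup B) = (2 : Cardinal) ^ ((2 : Cardinal) ^ m) := by
  set κ := (2 : Cardinal) ^ m
  have hcof : ℵ₀ < κ.ord.cof := hm.trans_lt (lt_cof_ord_power hm one_lt_two)
  have hκ : ℵ₀ < κ := hcof.trans_le (Ordinal.cof_ord_le κ)
  refine le_antisymm (hB ▸ mk_addSubgroup_le_two_pow) ?_
  have hsplit := hB ▸ mk_le_max_aleph0_rank_mul_mk_torsion ℤ B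
  rcases le_or_le_of_le_mul hκ.le hsplit with hrank | htors
  · calc 2 ^ κ ≤ 2 ^ Module.rank ℤ B :=
          power_le_power_left two_ne_zero ((le_max_iff.mp hrank).resolve_left hκ.not_ge)
      _ ≤ #(AddSubgroup B) := two_pow_rank_le_mk_addSubgroup ℤ
  · obtain ⟨p, hp, hpκ⟩ := exists_prime_le_mk_torsionBy_of_le_mk_torsion hcof htors
    exact two_pow_le_mk_addSubgroup_of_le_mk_torsionBy hκ hp hpκ
end

section
/- Let B be an abelian p-group of cardinality 2^m, where m is an infinite cardinal and p is a prime. Then the subgroup B(p) = {x ∈ B : p·x = 0} of elements killed by p has cardinality 2^m. -/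
/-!
Multiplication by `p` maps `B[p^(n+1)]` into `B[p^n]` with kernel `B[p]`, so by induction
`#B[p^n] ≤ max #B[p] ℵ₀` for every `n`. A `p`-group is the countable union of the `B[p^n]`,
hence `#B ≤ max #B[p] ℵ₀`; since `2 ^ m` is uncountable, this forces `#B[p] = 2 ^ m`.
-/

open Cardinal

theorem AddMonoidHom.mk_le_mk_mul_mk_ker_of_mapsTo {G H : Type u} [AddGroup G] [AddGroup H]
    (f : G →+ H) {s : Set G} {t : Set H} (hst : Set.MapsTo f s t) :
    #s ≤ #t * #f.ker := by
  refine mk_le_mk_mul_of_mk_preimage_le (hst.restrict f s t) fun y => ?_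
  rcases (hst.restrict f s t ⁻¹' {y}).eq_empty_or_nonempty with h | ⟨x₀, hx₀⟩
  · simp [h]
  have hfx₀ : f x₀ = y := congrArg Subtype.val hx₀
  refine mk_le_of_injective (f := fun x => ⟨-x₀.1 + x.1.1, ?_⟩) fun x x' hxx' => ?_
  · have hfx : f x.1 = y := congrArg Subtype.val x.2
    simp [AddMonoidHom.mem_ker, hfx, hfx₀]
  · exact Subtype.ext <| Subtype.ext <| add_right_injective _ (congrArg Subtype.val hxx')

theorem AddCommGroup.mk_pow_succ_nsmul_eq_zero_le {B : Type u} [AddCommGroup B] (p n : ℕ) :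
    #{x : B | p ^ (n + 1) • x = 0} ≤ #{x : B | p ^ n • x = 0} * #{x : B | p • x = 0} :=
  (DistribSMul.toAddMonoidHom B p).mk_le_mk_mul_mk_ker_of_mapsTo fun x (hx : _ = _) => by
    simpa [smul_smul, ← pow_succ] using hx

theorem AddCommGroup.mk_pow_nsmul_eq_zero_le {B : Type u} [AddCommGroup B] (p n : ℕ) :
    #{x : B | p ^ n • x = 0} ≤ max #{x : B | p • x = 0} ℵ₀ := by
  induction n with
  | zero => simp
  | succ n ih =>
    calc #{x : B | p ^ (n + 1) • x = 0}
        ≤ #{x : B | p ^ n • x = 0} * #{x : B | p • x = 0} := mk_pow_succ_nsmul_eq_zero_le p n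
      _ ≤ max #{x : B | p • x = 0} ℵ₀ * max #{x : B | p • x = 0} ℵ₀ :=
        mul_le_mul' ih (le_max_left _ _)
      _ = max #{x : B | p • x = 0} ℵ₀ := mul_eq_self (le_max_right _ _)

theorem AddCommGroup.mk_le_max_mk_nsmul_eq_zero {B : Type u} [AddCommGroup B] (p : ℕ)
    (hB : ∀ x : B, ∃ n : ℕ, p ^ n • x = 0) :
    #B ≤ max #{x : B // p • x = 0} ℵ₀ := by
  have hcover : (⋃ n : ULift.{u} ℕ, {x : B | p ^ n.down • x = 0}) = Set.univ :=
    Set.eq_univ_of_forall fun x =>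
      let ⟨n, hn⟩ := hB x
      Set.mem_iUnion.2 ⟨⟨n⟩, hn⟩
  calc #B = #(⋃ n : ULift.{u} ℕ, {x : B | p ^ n.down • x = 0}) := by rw [hcover, mk_univ]
    _ ≤ ℵ₀ * max #{x : B | p • x = 0} ℵ₀ :=
      (mk_iUnion_le _).trans <| mul_le_mul' (by simp)
        (ciSup_le' fun n => mk_pow_nsmul_eq_zero_le p n.down)
    _ = max #{x : B // p • x = 0} ℵ₀ := aleph0_mul_eq (le_max_right _ _)

theorem stmt_1_general {B : Type u} [AddCommGroup B] (p : ℕ)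
    (hpgroup : ∀ x : B, ∃ n : ℕ, p ^ n • x = 0)
    (m : Cardinal.{u}) (hm : ℵ₀ ≤ m) (hB : #B = (2 : Cardinal) ^ m) :
    #{x : B // p • x = 0} = (2 : Cardinal) ^ m := by
  have huncountable : ℵ₀ < (2 : Cardinal) ^ m :=
    (cantor ℵ₀).trans_le (power_le_power_left two_ne_zero hm)
  refine le_antisymm (hB ▸ mk_subtype_le _) ?_
  have hbound := hB ▸ AddCommGroup.mk_le_max_mk_nsmul_eq_zero p hpgroup
  exact (le_max_iff.1 hbound).resolve_right huncountable.not_ge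

/-- If `B` is an abelian `p`-group of cardinality `2 ^ m` with `m` infinite,
then the subgroup `B(p) = {x : p • x = 0}` has cardinality `2 ^ m`. -/
theorem stmt_1 {B : Type u} [AddCommGroup B] (p : ℕ) (hp : p.Prime)
    (hpgroup : ∀ x : B, ∃ n : ℕ, p ^ n • x = 0)
    (m : Cardinal.{u}) (hm : ℵ₀ ≤ m) (hB : #B = (2 : Cardinal) ^ m) :
    #{x : B // p • x = 0} = (2 : Cardinal) ^ m :=
  stmt_1_general p hpgroup m hm hB
end

section
/- Let A be an abelian group of infinite cardinality m. Then every subset X of the character group Hom(A, S^1) that separates points of A generates a subgroup of Hom(A, S^1) that also separates points; moreover, one can choose a point-separating subgroup H ≤ Hom(A, S^1) with |H| ≤ m. -/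
/-!
Characters with values in `ℚ/ℤ` separate the points of any abelian group (`ℚ/ℤ` is an
injective `ℤ`-module), and `ℚ/ℤ` embeds in `ℝ/ℤ`. Picking one separating character for each
pair of distinct points gives at most `m` characters, and the subgroup they generate has at
most `max m ℵ₀ = m` elements.
-/

open Cardinal

@[to_additive]
theorem Subgroup.cardinalMk_closure_le_max {G : Type*} [Group G] (s : Set G) :
    #(closure s) ≤ max #s ℵ₀ := by
  rcases s.eq_empty_or_nonempty with rfl | hs
  · simp [closure_empty]
  · have : Nonempty s := hs.to_subtype
    rw [FreeGroup.closure_eq_range, ← mk_freeGroup]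
    exact mk_range_le

noncomputable def AddCircle.ratToReal : AddCircle (1 : ℚ) →+ AddCircle (1 : ℝ) :=
  QuotientAddGroup.map _ _ (Rat.castHom ℝ).toAddMonoidHom <| by
    rw [AddSubgroup.zmultiples_le]
    exact ⟨1, by simp⟩

theorem AddCircle.ratToReal_injective : Function.Injective AddCircle.ratToReal := by
  rw [injective_iff_map_eq_zero]
  intro x hx
  induction x using QuotientAddGroup.induction_on with
  | H q =>
    obtain ⟨n, hn⟩ := (AddCircle.coe_eq_zero_iff (1 : ℝ)).mp hx
    have hnq : ((n : ℚ) : ℝ) = q := by simpa using hn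
    exact (AddCircle.coe_eq_zero_iff (1 : ℚ)).mpr ⟨n, by rw [zsmul_one]; exact_mod_cast hnq⟩

theorem exists_addCircle_char_apply_ne {A : Type*} [AddCommGroup A] {v w : A}
    (hvw : v ≠ w) : ∃ χ : A →+ AddCircle (1 : ℝ), χ v ≠ χ w := by
  obtain ⟨c, hc⟩ :=
    CharacterModule.exists_character_apply_ne_zero_of_ne_zero (sub_ne_zero.mpr hvw)
  refine ⟨AddCircle.ratToReal.comp c, fun h => hc ?_⟩
  apply AddCircle.ratToReal_injective
  rw [map_sub, map_sub, map_zero]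
  exact sub_eq_zero.mpr h

theorem exists_separating_addSubgroup_cardinalMk_le (A : Type*) [AddCommGroup A] :
    ∃ H : AddSubgroup (A →+ AddCircle (1 : ℝ)),
      (∀ v w : A, v ≠ w → ∃ χ ∈ H, χ v ≠ χ w) ∧ #H ≤ max #A ℵ₀ := by
  choose χ hχ using
    fun p : {p : A × A // p.1 ≠ p.2} => exists_addCircle_char_apply_ne p.2
  refine ⟨AddSubgroup.closure (Set.range χ), fun v w hvw => ?_, ?_⟩
  · exact ⟨χ ⟨(v, w), hvw⟩, AddSubgroup.subset_closure ⟨_, rfl⟩, hχ ⟨(v, w), hvw⟩⟩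
  · have hrange : #(Set.range χ) ≤ max #A ℵ₀ :=
      calc #(Set.range χ) ≤ #{p : A × A // p.1 ≠ p.2} := mk_range_le
        _ ≤ #(A × A) := mk_subtype_le _
        _ = #A * #A := by simp
        _ ≤ max #A ℵ₀ := by simpa using mul_le_max #A #A
    calc #(AddSubgroup.closure (Set.range χ)) ≤ max #(Set.range χ) ℵ₀ :=
          AddSubgroup.cardinalMk_closure_le_max _
      _ ≤ max #A ℵ₀ := max_le hrange (le_max_right _ _)

/-- For an abelian group `A` of infinite cardinality `m`: any point-separating set of
characters generates a point-separating subgroup, and there exists a point-separating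
subgroup of characters of cardinality at most `m`. -/
theorem stmt_4 {A : Type u} [AddCommGroup A] (m : Cardinal.{u}) (hm : ℵ₀ ≤ m)
    (hA : #A = m) :
    (∀ X : Set (A →+ AddCircle (1 : ℝ)),
        (∀ v w : A, v ≠ w → ∃ h ∈ X, h v ≠ h w) →
        (∀ v w : A, v ≠ w → ∃ h ∈ AddSubgroup.closure X, h v ≠ h w)) ∧
    ∃ H : AddSubgroup (A →+ AddCircle (1 : ℝ)),
      (∀ v w : A, v ≠ w → ∃ h ∈ H, h v ≠ h w) ∧ #H ≤ m := by
  refine ⟨fun X hX v w hvw => ?_, ?_⟩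
  · obtain ⟨χ, hχX, hχ⟩ := hX v w hvw
    exact ⟨χ, AddSubgroup.subset_closure hχX, hχ⟩
  · obtain ⟨H, hsep, hcard⟩ := exists_separating_addSubgroup_cardinalMk_le A
    exact ⟨H, hsep, hcard.trans_eq (by rw [hA, max_eq_left hm])⟩
end

section
/- Let V be a vector space over F_p of infinite dimension m. Then every subspace H of the dual space V* that separates the points of V contains a point-separating subspace of dimension at most m. -/
/-!
Choosing for each nonzero `v` a functional `f_v ∈ H` with `f_v v ≠ 0`, the span of the `f_v`
separates points and has dimension at most `#V`. Over a finite field an infinite-dimensional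
space has as many elements as its dimension, so `#V = m`.
-/

open Cardinal

theorem Module.Free.cardinalMk_eq_rank_of_aleph0_le {K : Type u} {V : Type v} [Ring K]
    [StrongRankCondition K] [AddCommGroup V] [Module K V] [Module.Free K V]
    (hinf : ℵ₀ ≤ Module.rank K V) (hK : lift.{v} #K ≤ lift.{u} (Module.rank K V)) :
    #V = Module.rank K V := by
  have := nontrivial_of_invariantBasisNumber K
  let b := Module.Free.chooseBasis K V
  have : Infinite (Module.Free.ChooseBasisIndex K V) := by
    rwa [Cardinal.infinite_iff, b.mk_eq_rank'']
  have h := lift_mk_eq'.{v, max u v}.2 ⟨b.repr.toEquiv⟩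
  rw [mk_finsupp_lift_of_infinite, b.mk_eq_rank''] at h
  simpa [lift_umax, max_eq_left hK] using h

theorem Module.Dual.exists_le_separating_rank_le {K : Type u} {V : Type v} [CommRing K]
    [StrongRankCondition K] [AddCommGroup V] [Module K V]
    (H : Submodule K (Module.Dual K V)) (hsep : ∀ v : V, v ≠ 0 → ∃ f ∈ H, f v ≠ 0) :
    ∃ Q : Submodule K (Module.Dual K V),
      Q ≤ H ∧ (∀ v : V, v ≠ 0 → ∃ f ∈ Q, f v ≠ 0) ∧ Module.rank K Q ≤ lift.{u} #V := by
  choose f hfH hfv using fun v : {v : V // v ≠ 0} ↦ hsep v v.2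
  refine ⟨Submodule.span K (Set.range f), Submodule.span_le.2 (Set.range_subset_iff.2 hfH),
    fun v hv ↦ ⟨f ⟨v, hv⟩, Submodule.subset_span ⟨_, rfl⟩, hfv _⟩, ?_⟩
  calc Module.rank K (Submodule.span K (Set.range f)) ≤ #(Set.range f) := rank_span_le _
    _ ≤ lift.{u} #{v : V // v ≠ 0} := by rw [← lift_le.{v}, lift_lift]; exact mk_range_le_lift
    _ ≤ lift.{u} #V := lift_le.2 (mk_subtype_le _)

/-- If `V` is an `𝔽_p`-vector space of infinite dimension `m`, then every
point-separating subspace of the dual contains a point-separating subspace of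
dimension at most `m`. -/
theorem stmt_9 {V : Type u} (p : ℕ) [Fact p.Prime] [AddCommGroup V] [Module (ZMod p) V]
    (m : Cardinal.{u}) (hm : ℵ₀ ≤ m) (hdim : Module.rank (ZMod p) V = m)
    (H : Submodule (ZMod p) (Module.Dual (ZMod p) V))
    (hsep : ∀ v : V, v ≠ 0 → ∃ f ∈ H, f v ≠ 0) :
    ∃ Q : Submodule (ZMod p) (Module.Dual (ZMod p) V),
      Q ≤ H ∧ (∀ v : V, v ≠ 0 → ∃ f ∈ Q, f v ≠ 0) ∧ Module.rank (ZMod p) Q ≤ m := by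
  obtain ⟨Q, hQH, hQsep, hQrank⟩ := Module.Dual.exists_le_separating_rank_le H hsep
  have hfield : lift.{u} #(ZMod p) ≤ lift.{0} (Module.rank (ZMod p) V) := by
    rw [lift_uzero, hdim]
    exact (lift_lt_aleph0.2 (lt_aleph0_of_finite _)).le.trans hm
  have hcard : #V = m := hdim ▸ Module.Free.cardinalMk_eq_rank_of_aleph0_le (hdim ▸ hm) hfield
  rw [lift_uzero, hcard] at hQrank
  exact ⟨Q, hQH, hQsep, hQrank⟩
end

section
/- Let V be an F_p-vector space and H ⊆ V* a minimal point-separating subspace of infinite dimension k. Then there is a linear isomorphism i : ∏_k F_p → V such that the pullback i*(H) ⊆ (∏_k F_p)* equals the subspace spanned by the coordinate projections. -/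
/-!
Evaluation identifies `V` with the full dual `H*`: it is injective because `H` separates
points, and surjective by minimality — for `0 ≠ ψ ∈ H*` the proper subspace `ker ψ ⊂ H` fails
to separate some `v ≠ 0`, so evaluation at `v` kills `ker ψ` and is therefore a nonzero multiple
of `ψ`. Choosing a basis of `H` indexed by `ι` gives `V ≅ H* ≅ (ι →₀ 𝔽_p)* ≅ ∏_ι 𝔽_p`, and
under this isomorphism the basis vectors of `H` pull back to the coordinate projections.
-/

open Cardinal

theorem Module.Dual.exists_smul_eq_of_ker_le {K E : Type*} [Field K] [AddCommGroup E]
    [Module K E] {φ ψ : Module.Dual K E} (h : LinearMap.ker ψ ≤ LinearMap.ker φ) :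
    ∃ c : K, c • ψ = φ := by
  have hmem := mem_span_of_iInf_ker_le_ker (L := fun _ : Unit => ψ) (K := φ) (by rwa [iInf_const])
  simpa [Submodule.mem_span_singleton] using hmem

namespace Submodule

theorem map_subtype_ker_lt {R M : Type*} [Ring R] [AddCommGroup M] [Module R M]
    {N : Submodule R M} {ψ : N →ₗ[R] R} (hψ : ψ ≠ 0) : (LinearMap.ker ψ).map N.subtype < N := by
  obtain ⟨x, hx⟩ := DFunLike.ne_iff.mp hψ
  refine lt_of_le_of_ne (map_subtype_le _ _) fun heq => hx ?_
  obtain ⟨y, hy, hyx⟩ : (x : M) ∈ (LinearMap.ker ψ).map N.subtype := by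
    rw [heq]; exact x.2
  rwa [← Subtype.ext hyx]

variable {K V : Type*} [Field K] [AddCommGroup V] [Module K V]

def SeparatesPoints (H : Submodule K (Module.Dual K V)) : Prop :=
  ∀ v : V, v ≠ 0 → ∃ f ∈ H, f v ≠ 0

variable {H : Submodule K (Module.Dual K V)}

theorem SeparatesPoints.injective_flip_subtype (hsep : H.SeparatesPoints) :
    Function.Injective H.subtype.flip := by
  refine (injective_iff_map_eq_zero _).mpr fun v hv => ?_
  by_contra hv0
  obtain ⟨f, hf, hfv⟩ := hsep v hv0
  exact hfv (LinearMap.congr_fun hv ⟨f, hf⟩)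

theorem SeparatesPoints.surjective_flip_subtype (hsep : H.SeparatesPoints)
    (hmin : ∀ H' < H, ¬ H'.SeparatesPoints) : Function.Surjective H.subtype.flip := by
  intro ψ
  rcases eq_or_ne ψ 0 with rfl | hψ
  · exact ⟨0, map_zero _⟩
  obtain ⟨v, hv, hvanish⟩ : ∃ v : V, v ≠ 0 ∧ ∀ f ∈ (LinearMap.ker ψ).map H.subtype, f v = 0 := by
    simpa [SeparatesPoints] using hmin _ (map_subtype_ker_lt hψ)
  obtain ⟨c, hc⟩ : ∃ c : K, c • ψ = H.subtype.flip v :=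
    Module.Dual.exists_smul_eq_of_ker_le fun f hf =>
      LinearMap.mem_ker.mpr (hvanish _ ⟨f, hf, rfl⟩)
  have hc0 : c ≠ 0 := by
    rintro rfl
    exact hv (hsep.injective_flip_subtype (by rw [← hc, zero_smul, map_zero]))
  exact ⟨c⁻¹ • v, by rw [map_smul, ← hc, smul_smul, inv_mul_cancel₀ hc0, one_smul]⟩

end Submodule

open Submodule in
theorem exists_linearEquiv_pi_map_dualMap_eq_span_proj {R V ι : Type*} [CommRing R]
    [AddCommGroup V] [Module R V] {H : Submodule R (Module.Dual R V)}
    (hH : Function.Bijective H.subtype.flip) (e : H ≃ₗ[R] (ι →₀ R)) :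
    ∃ i : (ι → R) ≃ₗ[R] V, H.map i.toLinearMap.dualMap =
      span R (Set.range fun j : ι => (LinearMap.proj j : (ι → R) →ₗ[R] R)) := by
  let E := LinearEquiv.ofBijective _ hH
  let i := ((Finsupp.llift R R R ι).trans e.dualMap).trans E.symm
  have hE (φ : Module.Dual R H) (f : H) : (f : Module.Dual R V) (E.symm φ) = φ f :=
    LinearMap.congr_fun (E.apply_symm_apply φ) f
  let b := Module.Basis.ofRepr e
  have hb (j : ι) : i.toLinearMap.dualMap (b j) = LinearMap.proj j := by
    ext g
    simp [i, hE, b]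
  refine ⟨i, ?_⟩
  rw [← H.map_subtype_top, ← b.span_eq, map_span, map_span, ← Set.range_comp, ← Set.range_comp]
  exact congrArg _ (congrArg _ (funext hb))

theorem stmt_13_general (p : ℕ) [Fact p.Prime] (V : Type u) [AddCommGroup V] [Module (ZMod p) V]
    (H : Submodule (ZMod p) (Module.Dual (ZMod p) V))
    (hsep : ∀ v : V, v ≠ 0 → ∃ f ∈ H, f v ≠ 0)
    (hmin : ∀ H' : Submodule (ZMod p) (Module.Dual (ZMod p) V),
      H' < H → ¬ ∀ v : V, v ≠ 0 → ∃ f ∈ H', f v ≠ 0)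
    (ι : Type u) (hk : Module.rank (ZMod p) H = #ι) :
    ∃ i : (ι → ZMod p) ≃ₗ[ZMod p] V,
      Submodule.map (i.toLinearMap.dualMap) H =
        Submodule.span (ZMod p)
          (Set.range fun j : ι => (LinearMap.proj j : (ι → ZMod p) →ₗ[ZMod p] ZMod p)) := by
  obtain ⟨e⟩ : Nonempty (H ≃ₗ[ZMod p] (ι →₀ ZMod p)) :=
    Module.nonempty_linearEquiv_iff_rank_eq.mpr (by rw [hk, rank_finsupp_self, lift_uzero])
  have hbij : Function.Bijective H.subtype.flip :=
    ⟨Submodule.SeparatesPoints.injective_flip_subtype hsep,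
      Submodule.SeparatesPoints.surjective_flip_subtype hsep hmin⟩
  exact exists_linearEquiv_pi_map_dualMap_eq_span_proj hbij e

/-- If `H ⊆ V*` is a minimal point-separating subspace of infinite dimension `k = #ι`,
then there is a linear isomorphism `i : ∏_k 𝔽_p → V` under which the pullback of `H`
is the span of the coordinate projections. -/
theorem stmt_13 (p : ℕ) [Fact p.Prime] (V : Type u) [AddCommGroup V] [Module (ZMod p) V]
    (H : Submodule (ZMod p) (Module.Dual (ZMod p) V))
    (hsep : ∀ v : V, v ≠ 0 → ∃ f ∈ H, f v ≠ 0)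
    (hmin : ∀ H' : Submodule (ZMod p) (Module.Dual (ZMod p) V),
      H' < H → ¬ ∀ v : V, v ≠ 0 → ∃ f ∈ H', f v ≠ 0)
    (ι : Type u) [Infinite ι] (hk : Module.rank (ZMod p) H = #ι) :
    ∃ i : (ι → ZMod p) ≃ₗ[ZMod p] V,
      Submodule.map (i.toLinearMap.dualMap) H =
        Submodule.span (ZMod p)
          (Set.range fun j : ι => (LinearMap.proj j : (ι → ZMod p) →ₗ[ZMod p] ZMod p)) :=
  stmt_13_general p V H hsep hmin ι hk
end

section
/- Let G be a Hausdorff topological abelian group which is an F_p-vector space (p·g = 0 for all g), and let H ⊆ G be an open compact subgroup. Then G is topologically isomorphic to H × (G/H), where G/H carries the discrete topology. -/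
/-!
Over `𝔽_p` the quotient map `G → G ⧸ H` splits by linear algebra, so `g ↦ (g - q ⟦g⟧, ⟦g⟧)` is an
algebraic isomorphism `G ≃+ H × (G ⧸ H)` for any additive section `q`. When `H` is open, `G ⧸ H`
is discrete, so `q` is automatically continuous and both directions of the isomorphism are too.
-/

namespace QuotientAddGroup

variable {G : Type*} [AddCommGroup G]

theorem exists_addMonoidHom_section_of_nsmul_eq_zero {p : ℕ} (hp : p.Prime)
    (hexp : ∀ g : G, p • g = 0) (H : AddSubgroup G) :
    ∃ q : G ⧸ H →+ G, ∀ x, (q x : G ⧸ H) = x := by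
  have : Fact p.Prime := ⟨hp⟩
  let : Module (ZMod p) G := AddCommGroup.zmodModule hexp
  let : Module (ZMod p) (G ⧸ H) :=
    QuotientAddGroup.zmodModule fun x => by rw [hexp x]; exact H.zero_mem
  obtain ⟨q, hq⟩ := Module.projective_lifting_property
    (h := .of_basis (.ofVectorSpace (ZMod p) (G ⧸ H))) ((mk' H).toZModLinearMap p) .id
    (mk'_surjective H)
  exact ⟨q.toAddMonoidHom, fun x => LinearMap.congr_fun hq x⟩

variable {H : AddSubgroup G} {q : G ⧸ H →+ G}

theorem sub_section_mk_mem (hq : ∀ x, (q x : G ⧸ H) = x) (g : G) : g - q g ∈ H := by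
  rw [← eq_zero_iff, mk_sub, hq, sub_self]

def prodEquivOfSection (q : G ⧸ H →+ G) (hq : ∀ x, (q x : G ⧸ H) = x) : G ≃+ H × (G ⧸ H) where
  toFun g := (⟨g - q g, sub_section_mk_mem hq g⟩, g)
  invFun x := x.1 + q x.2
  left_inv g := sub_add_cancel g (q g)
  right_inv := by
    rintro ⟨⟨h, hh⟩, x⟩
    have hmk : ((h + q x : G) : G ⧸ H) = x := by
      rw [mk_add, (eq_zero_iff h).2 hh, hq, zero_add]
    simp only [hmk, add_sub_cancel_right]
  map_add' a b := by
    refine Prod.ext (Subtype.ext ?_) (mk_add _ a b)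
    simp only [Prod.fst_add, AddSubgroup.coe_add, mk_add, map_add]
    abel

variable [TopologicalSpace G] [IsTopologicalAddGroup G]

theorem continuous_prodEquivOfSection (hopen : IsOpen (H : Set G))
    (hq : ∀ x, (q x : G ⧸ H) = x) : Continuous (prodEquivOfSection q hq) := by
  have : DiscreteTopology (G ⧸ H) := discreteTopology hopen
  refine .prodMk (.subtype_mk ?_ _) continuous_quotient_mk'
  exact continuous_id.sub (continuous_of_discreteTopology.comp continuous_quotient_mk')

theorem continuous_prodEquivOfSection_symm (hopen : IsOpen (H : Set G))
    (hq : ∀ x, (q x : G ⧸ H) = x) : Continuous (prodEquivOfSection q hq).symm := by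
  have : DiscreteTopology (G ⧸ H) := discreteTopology hopen
  exact (continuous_subtype_val.comp continuous_fst).add
    (continuous_of_discreteTopology.comp continuous_snd)

end QuotientAddGroup

theorem stmt_16_general (p : ℕ) (hp : p.Prime) (G : Type u) [AddCommGroup G]
    [TopologicalSpace G] [IsTopologicalAddGroup G]
    (hexp : ∀ g : G, p • g = 0)
    (H : AddSubgroup G) (hopen : IsOpen (H : Set G)) :
    ∃ e : G ≃+ (H × (G ⧸ H)), Continuous e ∧ Continuous e.symm := by
  obtain ⟨q, hq⟩ := QuotientAddGroup.exists_addMonoidHom_section_of_nsmul_eq_zero hp hexp H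
  exact ⟨QuotientAddGroup.prodEquivOfSection q hq,
    QuotientAddGroup.continuous_prodEquivOfSection hopen hq,
    QuotientAddGroup.continuous_prodEquivOfSection_symm hopen hq⟩

/-- If `G` is a Hausdorff topological abelian group of exponent a prime `p` and
`H ⊆ G` is a compact open subgroup, then `G` is topologically isomorphic to
`H × (G / H)` (with `G / H` carrying the quotient, hence discrete, topology). -/
theorem stmt_16 (p : ℕ) (hp : p.Prime) (G : Type u) [AddCommGroup G]
    [TopologicalSpace G] [IsTopologicalAddGroup G] [T2Space G]
    (hexp : ∀ g : G, p • g = 0)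
    (H : AddSubgroup G) (hopen : IsOpen (H : Set G)) (hcomp : IsCompact (H : Set G)) :
    ∃ e : G ≃+ (H × (G ⧸ H)), Continuous e ∧ Continuous e.symm :=
  stmt_16_general p hp G hexp H hopen
end

section
/- The abelian group ⊕_{ℵ₁} Z/pZ admits a compact Hausdorff group topology if and only if ℵ₁ = 2^ℵ₀ (the continuum hypothesis). -/
open Cardinal Set Topology Filter Function

/-! An infinite compact Hausdorff group has no isolated points, and a nonempty compact Hausdorff
space without isolated points carries a Cantor scheme of nested nonempty perfect sets, splitting
into disjoint pieces at each step; its branches give `2 ^ ℵ₀` distinct points. So a compact group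
structure on `⊕_{ℵ₁} ℤ/pℤ` forces `2 ^ ℵ₀ ≤ ℵ₁`. Conversely, under CH both `⊕_{ℵ₁} ℤ/pℤ` and
`∏_ℕ ℤ/pℤ` are `𝔽_p`-vector spaces of dimension `2 ^ ℵ₀`, so the product topology of the latter
transports to the former. -/

section CantorScheme

variable {X : Type*} [TopologicalSpace X] [T25Space X]

theorem Perfect.exists_bool_splitting {C : Set X} (hC : Perfect C) (hne : C.Nonempty) :
    ∃ D : Bool → Set X, (∀ b, (Perfect (D b) ∧ (D b).Nonempty) ∧ D b ⊆ C) ∧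
      Pairwise (Disjoint on D) := by
  obtain ⟨C₀, C₁, ⟨hC₀, hne₀, hsub₀⟩, ⟨hC₁, hne₁, hsub₁⟩, hdisj⟩ := hC.splitting hne
  refine ⟨fun b => cond b C₁ C₀, Bool.rec ⟨⟨hC₀, hne₀⟩, hsub₀⟩ ⟨⟨hC₁, hne₁⟩, hsub₁⟩, ?_⟩
  rintro (_ | _) (_ | _) hb
  exacts [(hb rfl).elim, hdisj, hdisj.symm, (hb rfl).elim]

noncomputable def splitPerfect (C : {C : Set X // Perfect C ∧ C.Nonempty}) (b : Bool) :
    {C : Set X // Perfect C ∧ C.Nonempty} :=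
  ⟨_, ((C.2.1.exists_bool_splitting C.2.2).choose_spec.1 b).1⟩

theorem splitPerfect_subset (C : {C : Set X // Perfect C ∧ C.Nonempty}) (b : Bool) :
    (splitPerfect C b).1 ⊆ C.1 :=
  ((C.2.1.exists_bool_splitting C.2.2).choose_spec.1 b).2

theorem disjoint_splitPerfect (C : {C : Set X // Perfect C ∧ C.Nonempty}) {b b' : Bool}
    (h : b ≠ b') : Disjoint (splitPerfect C b).1 (splitPerfect C b').1 :=
  (C.2.1.exists_bool_splitting C.2.2).choose_spec.2 h

variable [PerfectSpace X] [Nonempty X]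

noncomputable def cantorChain (x : ℕ → Bool) : ℕ → {C : Set X // Perfect C ∧ C.Nonempty}
  | 0 => ⟨univ, PerfectSpace.univ_perfect X, univ_nonempty⟩
  | n + 1 => splitPerfect (cantorChain x n) (x n)

theorem nonempty_iInter_cantorChain [CompactSpace X] (x : ℕ → Bool) :
    (⋂ n, (cantorChain (X := X) x n).1).Nonempty :=
  IsCompact.nonempty_iInter_of_sequence_nonempty_isCompact_isClosed _
    (fun _ => splitPerfect_subset _ _) (fun n => (cantorChain x n).2.2)
    (cantorChain x 0).2.1.closed.isCompact (fun n => (cantorChain x n).2.1.closed)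

theorem exists_injective_nat_bool_of_perfectSpace [CompactSpace X] :
    ∃ f : (ℕ → Bool) → X, Injective f := by
  choose f hf using nonempty_iInter_cantorChain (X := X)
  refine ⟨f, fun x y hxy => ?_⟩
  have step : ∀ n, cantorChain (X := X) x n = cantorChain y n → x n = y n := by
    intro n hn
    by_contra hne
    have hx := mem_iInter.1 (hf x) (n + 1)
    have hy := mem_iInter.1 (hf y) (n + 1)
    rw [cantorChain, hn] at hx
    rw [cantorChain, ← hxy] at hy
    exact disjoint_splitPerfect _ hne |>.ne_of_mem hx hy rfl
  have chain_eq : ∀ n, cantorChain (X := X) x n = cantorChain y n := by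
    intro n
    induction n with
    | zero => rfl
    | succ n ih => rw [cantorChain, cantorChain, ih, step n ih]
  exact funext fun n => step n (chain_eq n)

end CantorScheme

theorem continuum_le_mk_of_perfectSpace {X : Type*} [TopologicalSpace X] [T2Space X]
    [CompactSpace X] [PerfectSpace X] [Nonempty X] : 𝔠 ≤ #X := by
  obtain ⟨f, hf⟩ := exists_injective_nat_bool_of_perfectSpace (X := X)
  simpa using lift_mk_le_lift_mk_of_injective hf

theorem perfectSpace_of_not_discreteTopology {G : Type*} [TopologicalSpace G] [AddGroup G]
    [IsTopologicalAddGroup G] (h : ¬DiscreteTopology G) : PerfectSpace G := by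
  refine perfectSpace_iff_forall_not_isolated.2 fun x => ?_
  by_contra hx
  rw [not_neBot, ← isOpen_singleton_iff_punctured_nhds] at hx
  exact h <| discreteTopology_of_isOpen_singleton_zero <| by
    simpa using hx.preimage (continuous_const_add x)

theorem mk_nat_fun_eq_continuum {K : Type*} [Finite K] [Nontrivial K] : #(ℕ → K) = 𝔠 := by
  rw [mk_arrow, mk_nat, lift_aleph0, lift_uzero, ← Nat.cast_card, ← two_power_aleph0]
  exact nat_power_eq le_rfl Finite.one_lt_card

theorem nonempty_linearEquiv_finsupp_nat_fun {K ι : Type*} [Field K] [Finite K]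
    (hι : #ι = 𝔠) : Nonempty ((ι →₀ K) ≃ₗ[K] (ℕ → K)) := by
  refine nonempty_linearEquiv_of_lift_rank_eq ?_
  rw [rank_finsupp_self, rank_fun_infinite, mk_nat_fun_eq_continuum, hι]
  simp

theorem AddEquiv.exists_compact_groupTopology {G H : Type*} [AddGroup G] [AddGroup H]
    [TopologicalSpace H] [IsTopologicalAddGroup H] [T2Space H] [CompactSpace H] (e : G ≃+ H) :
    ∃ t : TopologicalSpace G, @IsTopologicalAddGroup G t _ ∧ @T2Space G t ∧ @CompactSpace G t := by
  let t : TopologicalSpace G := .induced e ‹_›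
  have he : IsInducing e := ⟨rfl⟩
  let h : G ≃ₜ H := e.toEquiv.toHomeomorphOfIsInducing he
  exact ⟨t, he.topologicalAddGroup e, h.symm.t2Space, h.symm.compactSpace⟩

universe u v in
theorem aleph_one_eq_continuum_iff_univ : aleph.{u} 1 = 𝔠 ↔ aleph.{v} 1 = 𝔠 := by
  rw [← lift_inj.{u, v}, ← lift_inj.{v, u} (a := aleph 1)]
  simp

/-- `⊕_{ℵ₁} ℤ/pℤ` admits a compact Hausdorff group topology if and only if the
continuum hypothesis `ℵ₁ = 2 ^ ℵ₀` holds. -/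
theorem stmt_18 (p : ℕ) (hp : p.Prime) (ι : Type) (hι : #ι = Cardinal.aleph 1) :
    (∃ t : TopologicalSpace (ι →₀ ZMod p),
        @IsTopologicalAddGroup (ι →₀ ZMod p) t _ ∧ @T2Space (ι →₀ ZMod p) t ∧
          @CompactSpace (ι →₀ ZMod p) t) ↔
      Cardinal.aleph 1 = (2 : Cardinal) ^ Cardinal.aleph0 := by
  have : Fact p.Prime := ⟨hp⟩
  have : Infinite ι := infinite_iff.2 (hι ▸ aleph0_le_aleph 1)
  have hcard : #(ι →₀ ZMod p) = ℵ₁ := by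
    rw [mk_finsupp_of_infinite, hι,
      max_eq_left ((lt_aleph0_of_finite _).le.trans (aleph0_le_aleph 1))]
  rw [two_power_aleph0, aleph_one_eq_continuum_iff_univ.{_, 0}]
  constructor
  · rintro ⟨t, _, _, _⟩
    have : PerfectSpace (ι →₀ ZMod p) := perfectSpace_of_not_discreteTopology fun _ =>
      Infinite.not_finite (α := ι →₀ ZMod p) finite_of_compact_of_discrete
    exact aleph_one_le_continuum.antisymm (hcard ▸ continuum_le_mk_of_perfectSpace)
  · intro hCH
    obtain ⟨e⟩ := nonempty_linearEquiv_finsupp_nat_fun (K := ZMod p) (hι.trans hCH)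
    let _ : TopologicalSpace (ZMod p) := ⊥
    have : DiscreteTopology (ZMod p) := ⟨rfl⟩
    exact e.toAddEquiv.exists_compact_groupTopology
end

section
/- For infinite cardinals, the topological groups F_{k,n} = (∏_k Z/pZ) × (⊕_n Z/pZ) (product topology on the first factor, discrete on the second) have cardinality max(2^k, n) and weight max(k, n); in particular, for distinct pairs (k, n) of cardinals (with at least one infinite and finite values only 0), the spaces F_{k,n} are pairwise non-homeomorphic. -/
/-! Write `C = ∏_k ℤ/p` (compact) and `D = ⊕_n ℤ/p` (discrete). The cardinality is
`#C * #D = 2^k * max n 1`. A basic open set of `C` constrains finitely many coordinates, so `C` has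
a base indexed by finite subsets of `k × ℤ/p` and, for infinite `k`, no base of size `< k`; as
the discrete factor has weight `w(D) = #D`, this gives the weight `max k n`.

Both indices are topological invariants. A compact subset of `C × D` projects to a finite subset
of `D`, so for infinite `n` the least number of compact sets covering `C × D` is `n`, and it is
finite when `n = 0`. Likewise every compact subset sits in some `C × F` with `F` finite, so for
infinite `k` the supremum of the weights of compact subsets is `w(C) = k`; and `C × D` is discrete
exactly when `k = 0`. -/

open Cardinal

/-- The weight of a topological space: the least cardinality of a topological basis. -/
noncomputable def tweight (X : Type u) [TopologicalSpace X] : Cardinal.{u} :=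
  sInf {c | ∃ B : Set (Set X), TopologicalSpace.IsTopologicalBasis B ∧ #B = c}

universe u v

open Set TopologicalSpace Topology

theorem Cardinal.lift_mk_le_lift_mk_of_finite_fibers {α : Type u} {β : Type v} [Infinite α]
    (f : α → β) (hf : ∀ b, (f ⁻¹' {b}).Finite) : lift.{v} #α ≤ lift.{u} #β := by
  have : Infinite β := by
    by_contra! hβ
    refine Set.infinite_univ (α := α) (.of_finite_fibers f (Set.toFinite _) fun b _ => ?_)
    simpa using hf b
  calc lift.{v} #α ≤ lift.{u} #β * ℵ₀ :=
        lift_mk_le_lift_mk_mul_of_lift_mk_preimage_le f fun b =>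
          lift_le_aleph0.2 (hf b).lt_aleph0.le
    _ = lift.{u} #β := mul_aleph0_eq (by simp)

section Weight

variable {X Y : Type u} [TopologicalSpace X] [TopologicalSpace Y]

theorem tweight_le_mk {B : Set (Set X)} (hB : IsTopologicalBasis B) : tweight X ≤ #B :=
  csInf_le (OrderBot.bddBelow _) ⟨B, hB, rfl⟩

theorem exists_isTopologicalBasis_mk_eq_tweight (X : Type u) [TopologicalSpace X] :
    ∃ B : Set (Set X), IsTopologicalBasis B ∧ #B = tweight X :=
  csInf_mem (s := {c | ∃ B : Set (Set X), IsTopologicalBasis B ∧ #B = c})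
    ⟨_, _, isTopologicalBasis_opens, rfl⟩

theorem Topology.IsInducing.tweight_le {f : X → Y} (hf : IsInducing f) :
    tweight X ≤ tweight Y := by
  obtain ⟨B, hB, hBY⟩ := exists_isTopologicalBasis_mk_eq_tweight Y
  exact (tweight_le_mk (hB.isInducing hf)).trans (mk_image_le.trans_eq hBY)

theorem Homeomorph.tweight_eq (e : X ≃ₜ Y) : tweight X = tweight Y :=
  e.isInducing.tweight_le.antisymm e.symm.isInducing.tweight_le

theorem tweight_eq_mk [DiscreteTopology X] : tweight X = #X := by
  refine le_antisymm ((tweight_le_mk (isTopologicalBasis_singletons X)).trans ?_) ?_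
  · exact mk_le_of_surjective (f := fun x : X => ⟨{x}, x, rfl⟩) fun ⟨_, x, hx⟩ =>
      ⟨x, by simp [hx]⟩
  · obtain ⟨B, hB, hBX⟩ := exists_isTopologicalBasis_mk_eq_tweight X
    have hmem (x : X) : {x} ∈ B := by
      obtain ⟨v, hvB, hxv, hvx⟩ :=
        hB.exists_subset_of_mem_open (mem_singleton x) (isOpen_discrete _)
      rwa [subset_antisymm hvx (singleton_subset_iff.2 hxv)] at hvB
    exact hBX ▸ mk_le_of_injective (f := fun x => (⟨{x}, hmem x⟩ : B))
      fun a b hab => singleton_injective (congrArg Subtype.val hab)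

theorem tweight_prod_le : tweight (X × Y) ≤ tweight X * tweight Y := by
  obtain ⟨B, hB, hBX⟩ := exists_isTopologicalBasis_mk_eq_tweight X
  obtain ⟨B', hB', hBY⟩ := exists_isTopologicalBasis_mk_eq_tweight Y
  exact (tweight_le_mk (hB.prod hB')).trans (mk_image2_le.trans_eq (by rw [hBX, hBY]))

end Weight

section Pi

variable {K : Type u} {α : Type v} [TopologicalSpace α]

theorem IsOpen.finite_setOf_forall_apply_eq [Nontrivial α] {V : Set (K → α)} (hV : IsOpen V)
    (hVne : V.Nonempty) (a : α) : {i | ∀ x ∈ V, x i = a}.Finite := by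
  classical
  obtain ⟨x, hx⟩ := hVne
  obtain ⟨b, hba⟩ := exists_ne a
  obtain ⟨I, hI⟩ := exists_finset_piecewise_mem_of_mem_nhds (hV.mem_nhds hx) fun _ => b
  refine I.finite_toSet.subset fun i hi => by_contra fun hiI => hba ?_
  simpa [Finset.piecewise_eq_of_notMem _ _ _ hiI] using hi _ hI

variable [DiscreteTopology α]

theorem tweight_pi_le [Finite α] : tweight (K → α) ≤ max (lift.{v} #K) ℵ₀ := by
  classical
  let cyl : Finset (K × α) → Set (K → α) := fun s => ⋂ q ∈ s, (· q.1) ⁻¹' {q.2}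
  have hB : IsTopologicalBasis (range cyl) := by
    refine isTopologicalBasis_of_isOpen_of_nhds ?_ fun x U hxU hU => ?_
    · rintro _ ⟨s, rfl⟩
      exact isOpen_biInter_finset fun q _ => (isOpen_discrete _).preimage (continuous_apply q.1)
    · obtain ⟨I, u, hu, hIU⟩ := isOpen_pi_iff.1 hU x hxU
      refine ⟨_, ⟨I.image fun i => (i, x i), rfl⟩, by simp [cyl],
        fun y hy => hIU fun i hi => ?_⟩
      simp only [cyl, mem_iInter, Finset.mem_image] at hy
      have hyi : y i = x i := hy (i, x i) ⟨i, hi, rfl⟩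
      exact hyi ▸ (hu i hi).2
  have hfin : #(K × α) ≤ max (lift.{v} #K) ℵ₀ := by
    rw [mk_prod]
    refine (mul_le_max _ _).trans (max_le (max_le (le_max_left _ _) ?_) (le_max_right _ _))
    exact (lift_le_aleph0.2 (lt_aleph0_of_finite α).le).trans (le_max_right _ _)
  calc tweight (K → α) ≤ #(range cyl) := tweight_le_mk hB
    _ ≤ #(Finset (K × α)) := mk_range_le
    _ ≤ #(List (K × α)) := mk_le_of_surjective List.toFinset_surjective
    _ ≤ max ℵ₀ #(K × α) := mk_list_le_max _
    _ ≤ max (lift.{v} #K) ℵ₀ := max_le (le_max_right _ _) hfin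

/- Each coordinate hyperplane `{x | x i = a}` contains a basic open set around the constant
point `a`; a nonempty open set fixes only finitely many coordinates, so no basic open set serves
infinitely many `i`. -/
theorem lift_mk_le_tweight_pi [Infinite K] [Nontrivial α] :
    lift.{v} #K ≤ tweight (K → α) := by
  obtain ⟨B, hB, hBK⟩ := exists_isTopologicalBasis_mk_eq_tweight (K → α)
  obtain ⟨a⟩ := (inferInstance : Nonempty α)
  have hU (i : K) : IsOpen {x : K → α | x i = a} :=
    (isOpen_discrete {a}).preimage (continuous_apply (A := fun _ : K => α) i)
  choose b hbB hab hbU using fun i => hB.exists_subset_of_mem_open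
    (show (fun _ => a) ∈ {x : K → α | x i = a} from rfl) (hU i)
  have hfib (s : B) : ((fun i => (⟨b i, hbB i⟩ : B)) ⁻¹' {s}).Finite := by
    rcases eq_empty_or_nonempty ((fun i => (⟨b i, hbB i⟩ : B)) ⁻¹' {s}) with hs | ⟨j, hj⟩
    · exact hs ▸ finite_empty
    have hbj : b j = s := congrArg Subtype.val hj
    refine ((hB.isOpen s.2).finite_setOf_forall_apply_eq ⟨_, hbj ▸ hab j⟩ a).subset
      fun i hi x hx => ?_
    have hbi : b i = s := congrArg Subtype.val hi
    exact hbU i (hbi ▸ hx)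
  have := lift_mk_le_lift_mk_of_finite_fibers _ hfib
  rwa [hBK, lift_umax.{u, v}, lift_id'.{u, v}] at this

theorem tweight_pi_eq [Infinite K] [Finite α] [Nontrivial α] :
    tweight (K → α) = lift.{v} #K :=
  le_antisymm (tweight_pi_le.trans_eq (max_eq_left (by simp))) lift_mk_le_tweight_pi

end Pi

noncomputable def compactCoverNumber (X : Type u) [TopologicalSpace X] : Cardinal.{u} :=
  sInf {c | ∃ S : Set (Set X), (∀ s ∈ S, IsCompact s) ∧ ⋃₀ S = Set.univ ∧ #S = c}

noncomputable def supCompactWeight (X : Type u) [TopologicalSpace X] : Cardinal.{u} :=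
  ⨆ s : {s : Set X // IsCompact s}, tweight s

section Invariants

variable {X Y : Type u} [TopologicalSpace X] [TopologicalSpace Y]

theorem compactCoverNumber_le_mk {S : Set (Set X)} (hS : ∀ s ∈ S, IsCompact s)
    (hSX : ⋃₀ S = Set.univ) : compactCoverNumber X ≤ #S :=
  csInf_le (OrderBot.bddBelow _) ⟨S, hS, hSX, rfl⟩

theorem exists_compact_cover_mk_eq_compactCoverNumber (X : Type u) [TopologicalSpace X] :
    ∃ S : Set (Set X), (∀ s ∈ S, IsCompact s) ∧ ⋃₀ S = Set.univ ∧
      #S = compactCoverNumber X := by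
  refine csInf_mem
    (s := {c | ∃ S : Set (Set X), (∀ s ∈ S, IsCompact s) ∧ ⋃₀ S = Set.univ ∧ #S = c})
    ⟨_, range fun x : X => {x}, ?_, ?_, rfl⟩
  · rintro _ ⟨x, rfl⟩
    exact isCompact_singleton
  · rw [sUnion_range, iUnion_of_singleton]

theorem Homeomorph.compactCoverNumber_le (e : X ≃ₜ Y) :
    compactCoverNumber Y ≤ compactCoverNumber X := by
  obtain ⟨S, hS, hSX, hSc⟩ := exists_compact_cover_mk_eq_compactCoverNumber X
  refine (compactCoverNumber_le_mk (S := Set.image e '' S) ?_ ?_).trans (mk_image_le.trans_eq hSc)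
  · rintro _ ⟨s, hs, rfl⟩
    exact (hS s hs).image e.continuous
  · rw [sUnion_image, ← image_iUnion₂, ← sUnion_eq_biUnion, hSX, image_univ, e.range_coe]

theorem Homeomorph.compactCoverNumber_eq (e : X ≃ₜ Y) :
    compactCoverNumber X = compactCoverNumber Y :=
  e.symm.compactCoverNumber_le.antisymm e.compactCoverNumber_le

theorem tweight_le_supCompactWeight [CompactSpace Y] {f : Y → X} (hf : IsEmbedding f) :
    tweight Y ≤ supCompactWeight X :=
  le_ciSup_of_le bddAbove_of_small ⟨range f, isCompact_range hf.continuous⟩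
    hf.toHomeomorph.tweight_eq.le

theorem Homeomorph.supCompactWeight_le (e : X ≃ₜ Y) :
    supCompactWeight X ≤ supCompactWeight Y :=
  have : Nonempty {s : Set X // IsCompact s} := ⟨⟨∅, isCompact_empty⟩⟩
  ciSup_le fun s =>
    have := isCompact_iff_compactSpace.1 s.2
    tweight_le_supCompactWeight (e.isEmbedding.comp IsEmbedding.subtypeVal)

theorem Homeomorph.supCompactWeight_eq (e : X ≃ₜ Y) :
    supCompactWeight X = supCompactWeight Y :=
  e.supCompactWeight_le.antisymm e.symm.supCompactWeight_le

end Invariants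

section Prod

variable {C D : Type u} [TopologicalSpace C] [TopologicalSpace D]

theorem compactCoverNumber_prod_le [CompactSpace C] : compactCoverNumber (C × D) ≤ #D := by
  refine (compactCoverNumber_le_mk (S := range fun d : D => Set.univ ×ˢ {d}) ?_ ?_).trans
    mk_range_le
  · rintro _ ⟨d, rfl⟩
    exact isCompact_univ.prod isCompact_singleton
  · ext x
    simp

theorem mk_le_compactCoverNumber_prod [Nonempty C] [Infinite D] [DiscreteTopology D] :
    #D ≤ compactCoverNumber (C × D) := by
  obtain ⟨S, hS, hSX, hSc⟩ := exists_compact_cover_mk_eq_compactCoverNumber (C × D)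
  obtain ⟨c⟩ := ‹Nonempty C›
  have hcover (d : D) : ∃ s ∈ S, (c, d) ∈ s := mem_sUnion.1 (hSX ▸ mem_univ (c, d))
  choose s hsS hcs using hcover
  have hfib (t : S) : ((fun d => (⟨s d, hsS d⟩ : S)) ⁻¹' {t}).Finite := by
    refine ((hS t t.2).image continuous_snd).finite_of_discrete.subset fun d hd => ?_
    have hst : s d = t := congrArg Subtype.val hd
    exact ⟨(c, d), hst ▸ hcs d, rfl⟩
  simpa [hSc] using lift_mk_le_lift_mk_of_finite_fibers _ hfib

theorem supCompactWeight_prod_le [DiscreteTopology D] :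
    supCompactWeight (C × D) ≤ tweight C * ℵ₀ := by
  refine ciSup_le' fun s => ?_
  have hF : (Prod.snd '' s.1).Finite := (s.2.image continuous_snd).finite_of_discrete
  have : Finite (Prod.snd '' s.1) := hF.to_subtype
  set g : s.1 → C × (Prod.snd '' s.1) := fun x => (x.1.1, ⟨x.1.2, mem_image_of_mem _ x.2⟩)
  have hg : IsInducing g := IsInducing.of_comp (by fun_prop)
    (continuous_id.prodMap continuous_subtype_val) IsInducing.subtypeVal
  calc tweight s.1 ≤ tweight (C × (Prod.snd '' s.1)) := hg.tweight_le
    _ ≤ tweight C * tweight (Prod.snd '' s.1) := tweight_prod_le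
    _ ≤ tweight C * ℵ₀ := by
      rw [tweight_eq_mk (X := Prod.snd '' s.1)]
      exact mul_le_mul_right (lt_aleph0_of_finite _).le _

theorem not_discreteTopology_prod [CompactSpace C] [Infinite C] [Nonempty D] :
    ¬ DiscreteTopology (C × D) := fun _ => by
  obtain ⟨d⟩ := ‹Nonempty D›
  have := (isEmbedding_prodMkLeft (X := C) d).discreteTopology
  have : Finite C := finite_of_compact_of_discrete
  exact _root_.not_finite C

end Prod

section PiFinsupp

variable {K N : Type u} {α : Type v} [Finite α] [Nontrivial α]

theorem mk_finsupp_of_infinite_of_finite [Zero α] [Infinite N] : #(N →₀ α) = lift.{v} #N := by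
  rw [mk_finsupp_lift_of_infinite, max_eq_left]
  exact (lift_lt_aleph0.2 (lt_aleph0_of_finite α)).le.trans (by simp)

theorem mk_pi_eq_two_pow (hK : Infinite K ∨ IsEmpty K) : #(K → α) = 2 ^ lift.{v} #K := by
  rcases hK with hK | hK
  · obtain ⟨n, hn⟩ := lt_aleph0.1 (lift_lt_aleph0.{v, u}.2 (lt_aleph0_of_finite α))
    have h2n : 2 ≤ n := by
      have : lift.{u} (1 : Cardinal.{v}) < lift.{u} #α :=
        lift_lt.2 (one_lt_iff_nontrivial.2 ‹_›)
      rw [hn, lift_one] at this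
      exact_mod_cast this
    rw [mk_arrow, hn]
    exact nat_power_eq (by simp) h2n
  · simp

variable [Zero α]

theorem mk_prod_pi_finsupp (hK : Infinite K ∨ IsEmpty K) (hN : Infinite N ∨ IsEmpty N)
    (hKN : Infinite K ∨ Infinite N) :
    #((K → α) × (N →₀ α)) = max (2 ^ lift.{v} #K) (lift.{v} #N) := by
  rw [mk_prod, lift_id, lift_id, mk_pi_eq_two_pow hK]
  rcases hN with hN | hN
  · rw [mk_finsupp_of_infinite_of_finite]
    exact mul_eq_max_of_aleph0_le_right (power_ne_zero _ two_ne_zero) (by simp)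
  · have : Infinite K := hKN.resolve_right (not_infinite_iff_finite.2 inferInstance)
    simp

variable [TopologicalSpace α] [TopologicalSpace (N →₀ α)] [DiscreteTopology (N →₀ α)]

theorem lift_mk_eq_ite_compactCoverNumber (hN : Infinite N ∨ IsEmpty N) :
    lift.{v} #N = if compactCoverNumber ((K → α) × (N →₀ α)) < ℵ₀ then 0
      else compactCoverNumber ((K → α) × (N →₀ α)) := by
  rcases hN with hN | hN
  · have h : compactCoverNumber ((K → α) × (N →₀ α)) = lift.{v} #N :=
      le_antisymm (compactCoverNumber_prod_le.trans_eq mk_finsupp_of_infinite_of_finite)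
        (mk_finsupp_of_infinite_of_finite.symm.trans_le mk_le_compactCoverNumber_prod)
    simp [h]
  · have h : compactCoverNumber ((K → α) × (N →₀ α)) < ℵ₀ :=
      compactCoverNumber_prod_le.trans_lt (by simp)
    simp [h]

variable [DiscreteTopology α]

theorem tweight_prod_pi_finsupp (hK : Infinite K ∨ IsEmpty K) (hN : Infinite N ∨ IsEmpty N)
    (hKN : Infinite K ∨ Infinite N) :
    tweight ((K → α) × (N →₀ α)) = max (lift.{v} #K) (lift.{v} #N) := by
  have hm : ℵ₀ ≤ max (lift.{v} #K) (lift.{v} #N) := by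
    rcases hKN with hKN | hKN <;> simp
  have hN' : lift.{v} #N ≤ #(N →₀ α) := by
    rcases hN with hN | hN
    · exact mk_finsupp_of_infinite_of_finite.ge
    · simp
  apply le_antisymm
  · have hC : tweight (K → α) ≤ max (lift.{v} #K) (lift.{v} #N) :=
      tweight_pi_le.trans (max_le (le_max_left _ _) hm)
    have hD : tweight (N →₀ α) ≤ max (lift.{v} #K) (lift.{v} #N) := by
      rw [tweight_eq_mk]
      rcases hN with hN | hN
      · exact mk_finsupp_of_infinite_of_finite.trans_le (le_max_right _ _)
      · simpa using one_le_aleph0.trans hm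
    calc tweight ((K → α) × (N →₀ α))
      _ ≤ tweight (K → α) * tweight (N →₀ α) := tweight_prod_le
      _ ≤ _ * _ := mul_le_mul' hC hD
      _ = _ := mul_eq_self hm
  · refine max_le ?_ (hN'.trans ?_)
    · rcases hK with hK | hK
      · exact lift_mk_le_tweight_pi.trans (isEmbedding_prodMkLeft 0).isInducing.tweight_le
      · simp
    · rw [← tweight_eq_mk]
      exact (isEmbedding_prodMkRight 0).isInducing.tweight_le

open scoped Classical in
theorem lift_mk_eq_ite_supCompactWeight (hK : Infinite K ∨ IsEmpty K) :
    lift.{v} #K = if DiscreteTopology ((K → α) × (N →₀ α)) then 0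
      else supCompactWeight ((K → α) × (N →₀ α)) := by
  rcases hK with hK | hK
  · have h : supCompactWeight ((K → α) × (N →₀ α)) = lift.{v} #K := by
      refine le_antisymm ?_ ?_
      · calc supCompactWeight ((K → α) × (N →₀ α)) ≤ tweight (K → α) * ℵ₀ :=
              supCompactWeight_prod_le
          _ = lift.{v} #K := by rw [tweight_pi_eq, mul_aleph0_eq (by simp)]
      · exact tweight_pi_eq.symm.trans_le
          (tweight_le_supCompactWeight (isEmbedding_prodMkLeft 0))
    simp [h, not_discreteTopology_prod]
  · have : DiscreteTopology ((K → α) × (N →₀ α)) := inferInstance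
    simp [this]

end PiFinsupp

/-- The locally compact groups `F_{k,n} = (∏_k ℤ/pℤ) × (⊕_n ℤ/pℤ)` (compact product
topology times discrete topology) have cardinality `max (2 ^ k) n` and weight
`max k n`; for distinct pairs `(k, n)` they are pairwise non-homeomorphic. -/
theorem stmt_19 (p : ℕ) [Fact p.Prime] :
    ∀ K N : Type u, (Infinite K ∨ IsEmpty K) → (Infinite N ∨ IsEmpty N) →
      (Infinite K ∨ Infinite N) →
      letI : TopologicalSpace (ZMod p) := ⊥
      letI : TopologicalSpace (N →₀ ZMod p) := ⊥
      (#((K → ZMod p) × (N →₀ ZMod p)) = max ((2 : Cardinal) ^ #K) #N ∧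
        tweight ((K → ZMod p) × (N →₀ ZMod p)) = max #K #N) ∧
      ∀ K' N' : Type u, (Infinite K' ∨ IsEmpty K') → (Infinite N' ∨ IsEmpty N') →
        (Infinite K' ∨ Infinite N') → (#K ≠ #K' ∨ #N ≠ #N') →
        letI : TopologicalSpace (N' →₀ ZMod p) := ⊥
        IsEmpty (((K → ZMod p) × (N →₀ ZMod p)) ≃ₜ ((K' → ZMod p) × (N' →₀ ZMod p))) := by
  have : NeZero p := ⟨(Fact.out : p.Prime).ne_zero⟩
  intro K N hK hN hKN
  let : TopologicalSpace (ZMod p) := ⊥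
  have : DiscreteTopology (ZMod p) := ⟨rfl⟩
  let : TopologicalSpace (N →₀ ZMod p) := ⊥
  have : DiscreteTopology (N →₀ ZMod p) := ⟨rfl⟩
  refine ⟨⟨by simpa using mk_prod_pi_finsupp (α := ZMod p) hK hN hKN,
    by simpa using tweight_prod_pi_finsupp (α := ZMod p) hK hN hKN⟩,
    fun K' N' hK' hN' _ hne => ?_⟩
  let : TopologicalSpace (N' →₀ ZMod p) := ⊥
  have : DiscreteTopology (N' →₀ ZMod p) := ⟨rfl⟩
  refine ⟨fun e => ?_⟩
  classical
  refine hne.elim (· ?_) (· ?_)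
  · rw [← lift_uzero #K, ← lift_uzero #K',
      lift_mk_eq_ite_supCompactWeight (N := N) (α := ZMod p) hK,
      lift_mk_eq_ite_supCompactWeight (N := N') (α := ZMod p) hK', e.supCompactWeight_eq]
    exact if_congr e.discreteTopology_iff rfl rfl
  · rw [← lift_uzero #N, ← lift_uzero #N',
      lift_mk_eq_ite_compactCoverNumber (K := K) (α := ZMod p) hN,
      lift_mk_eq_ite_compactCoverNumber (K := K') (α := ZMod p) hN', e.compactCoverNumber_eq]
end
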